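/- arXiv:2112.02504 — 2 statements merged into one kernel-verified Lean document; each statement's English description precedes it below -/
import Mathlib

section
/- Let $P$ be a finite set of $n$ data items, let $H>0$, and suppose each item $i$ has a value $v_i\in[0, 2^N H]$ where $N=\lceil\log_2 n\rceil$, with $\frac{1}{n}\sum_i v_i = H$. Partition $P$ into layers $P_0=\{i: v_i\le H\}$ and $P_j=\{i: 2^{j-1}H < v_i \le 2^j H\}$ for $1\le j\le N$. Then $\sum_{j=0}^N |P_j|\, 2^j \le 3n$. -/
open Finset

/-- Claim 1 of the paper: the layered partition based on values `v i` with mean `H`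
satisfies `∑_{j=0}^{N} |P_j| 2^j ≤ 3 n`. -/
theorem stmt1 {ι : Type*} [Fintype ι] [DecidableEq ι] (n : ℕ) (hn : n = Fintype.card ι)
    (hn1 : 1 ≤ n) (H : ℝ) (hH : 0 < H) (N : ℕ) (hN : N = ⌈Real.logb 2 n⌉₊)
    (v : ι → ℝ) (hv0 : ∀ i, 0 ≤ v i) (hvup : ∀ i, v i ≤ 2 ^ N * H)
    (hmean : (∑ i, v i) / n = H)
    (P : ℕ → Finset ι)
    (hP0 : P 0 = Finset.univ.filter (fun i => v i ≤ H))
    (hPj : ∀ j, 1 ≤ j → j ≤ N →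
      P j = Finset.univ.filter (fun i => 2 ^ (j - 1) * H < v i ∧ v i ≤ 2 ^ j * H)) :
    ∑ j ∈ Finset.range (N + 1), ((P j).card : ℝ) * 2 ^ j ≤ 3 * n := by
  have hn0 : (0:ℝ) < (n:ℝ) := by exact_mod_cast hn1
  have hsum : ∑ i, v i = n * H := by
    field_simp at hmean; linarith [hmean]
  -- key pointwise bound
  have hkey : ∀ j ∈ Finset.range (N + 1), ∀ i ∈ P j, (2:ℝ) ^ j * H ≤ 2 * v i + H := by
    intro j hj i hi
    rcases Nat.eq_zero_or_pos j with rfl | hj1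
    · rw [hP0] at hi
      simp only [Finset.mem_filter] at hi
      have := hv0 i
      simp; linarith
    · rw [hPj j hj1 (by simp only [Finset.mem_range] at hj; omega : j ≤ N)] at hi
      simp only [Finset.mem_filter] at hi
      have h1 : (2:ℝ) ^ (j-1) * H < v i := hi.2.1
      obtain ⟨k, rfl⟩ : ∃ k, j = k + 1 := ⟨j - 1, by omega⟩
      simp only [Nat.add_sub_cancel] at h1
      rw [pow_succ']; nlinarith
  -- membership characterization
  have hmem : ∀ j ∈ Finset.range (N + 1), ∀ i ∈ P j, v i ≤ 2 ^ j * H ∧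
      (1 ≤ j → 2 ^ (j-1) * H < v i) := by
    intro j hj i hi
    rcases Nat.eq_zero_or_pos j with rfl | hj1
    · rw [hP0] at hi; simp only [Finset.mem_filter] at hi
      exact ⟨by simpa using hi.2, by omega⟩
    · rw [hPj j hj1 (by simp only [Finset.mem_range] at hj; omega)] at hi
      simp only [Finset.mem_filter] at hi
      exact ⟨hi.2.2, fun _ => hi.2.1⟩
  -- disjointness
  have hdisj : ∀ j ∈ Finset.range (N+1), ∀ k ∈ Finset.range (N+1), j ≠ k →
      Disjoint (P j) (P k) := by
    have key : ∀ j ∈ Finset.range (N+1), ∀ k ∈ Finset.range (N+1), j < k →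
        Disjoint (P j) (P k) := by
      intro j hj k hk hjk
      rw [Finset.disjoint_left]
      intro i hij hik
      have h1 := (hmem j hj i hij).1
      have h2 := (hmem k hk i hik).2 (by omega)
      have hle : (2:ℝ) ^ j ≤ 2 ^ (k-1) := by
        apply pow_le_pow_right₀ (by norm_num); omega
      nlinarith
    intro j hj k hk hjk
    rcases lt_or_gt_of_ne hjk with h | h
    · exact key j hj k hk h
    · exact (key k hk j hj h).symm
  set S : Finset ι := (Finset.range (N+1)).biUnion P with hS
  have hcard : (S.card : ℝ) ≤ n := by
    have : S.card ≤ Fintype.card ι := Finset.card_le_card (Finset.subset_univ S)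
    exact_mod_cast hn ▸ this
  have hsumS : ∑ i ∈ S, v i ≤ n * H := by
    rw [← hsum]
    exact Finset.sum_le_sum_of_subset_of_nonneg (Finset.subset_univ S)
      (fun i _ _ => hv0 i)
  have hcards : ∑ j ∈ Finset.range (N+1), ((P j).card : ℝ) = (S.card : ℝ) := by
    rw [hS, Finset.card_biUnion hdisj]; push_cast; ring
  have main : (∑ j ∈ Finset.range (N + 1), ((P j).card : ℝ) * 2 ^ j) * H ≤ 3 * n * H := by
    have e1 : (∑ j ∈ Finset.range (N + 1), ((P j).card : ℝ) * 2 ^ j) * H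
        = ∑ j ∈ Finset.range (N + 1), ∑ _i ∈ P j, (2:ℝ) ^ j * H := by
      rw [Finset.sum_mul]
      refine Finset.sum_congr rfl fun j _ => ?_
      rw [Finset.sum_const, nsmul_eq_mul]; ring
    have e2 : ∑ j ∈ Finset.range (N + 1), ∑ i ∈ P j, (2:ℝ) ^ j * H
        ≤ ∑ j ∈ Finset.range (N + 1), ∑ i ∈ P j, (2 * v i + H) := by
      refine Finset.sum_le_sum fun j hj => Finset.sum_le_sum fun i hi => hkey j hj i hi
    have e3 : ∑ j ∈ Finset.range (N + 1), ∑ i ∈ P j, (2 * v i + H)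
        = ∑ i ∈ S, (2 * v i + H) := (Finset.sum_biUnion hdisj).symm
    have e4 : ∑ i ∈ S, (2 * v i + H) = 2 * (∑ i ∈ S, v i) + S.card * H := by
      rw [Finset.sum_add_distrib, Finset.sum_const, nsmul_eq_mul, ← Finset.mul_sum]
    have e5 : 2 * (∑ i ∈ S, v i) + (S.card : ℝ) * H ≤ 2 * (n * H) + n * H := by
      have := mul_le_mul_of_nonneg_right hcard hH.le
      linarith
    calc (∑ j ∈ Finset.range (N + 1), ((P j).card : ℝ) * 2 ^ j) * H
        = ∑ j ∈ Finset.range (N + 1), ∑ _i ∈ P j, (2:ℝ) ^ j * H := e1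
      _ ≤ ∑ j ∈ Finset.range (N + 1), ∑ i ∈ P j, (2 * v i + H) := e2
      _ = ∑ i ∈ S, (2 * v i + H) := e3
      _ = 2 * (∑ i ∈ S, v i) + S.card * H := e4
      _ ≤ 2 * (n * H) + n * H := e5
      _ = 3 * n * H := by ring
  exact le_of_mul_le_mul_right main hH
end

section
/- Let $v_i\in[0,2^N H]$ be values on a finite index set partitioned into layers $P_j$ as in the layered construction, and suppose each item $i\in P_j$ has a value satisfying the layer bounds $2^{j-1}H - B \le f_i(\beta) \le 2^j H + B$ for some $B\ge 0$ (with lower bound $0$ for $j=0$). If for each $j$ the weighted subsample average satisfies $\big|\frac{|P_j|}{|Q_j|}\sum_{i\in Q_j}f_i(\beta) - \sum_{i\in P_j}f_i(\beta)\big| \le |P_j|\,\epsilon_1 2^{j-1}H$, then $n|\tilde F(\beta)-F(\beta)| \le \sum_{j=0}^N |P_j|\,\epsilon_1 2^{j-1}H \le \tfrac{3}{2}\epsilon_1 n H$, where $F(\beta)=\frac1n\sum_i f_i(\beta)$ and $\tilde F(\beta)=\frac1n\sum_j \frac{|P_j|}{|Q_j|}\sum_{i\in Q_j}f_i(\beta)$.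 -/
open Finset

/-- Lemma 2 of the paper (deterministic part): per-layer sampling errors combine into
the global additive bound `n |F̃(β) - F(β)| ≤ ∑_j |P_j| ε₁ 2^{j-1} H ≤ (3/2) ε₁ n H`. -/
theorem stmt3 (n N : ℕ) (hn : 0 < n) (H B ε₁ : ℝ) (hH : 0 < H) (hB : 0 ≤ B)
    (hε₁ : 0 ≤ ε₁)
    (v : Fin n → ℝ) (hv0 : ∀ i, 0 ≤ v i) (hvup : ∀ i, v i ≤ 2 ^ N * H)
    (hmean : (∑ i, v i) / n = H)
    (P : ℕ → Finset (Fin n))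
    (hP0 : P 0 = Finset.univ.filter (fun i => v i ≤ H))
    (hPj : ∀ j, 1 ≤ j → j ≤ N →
      P j = Finset.univ.filter (fun i => 2 ^ (j - 1) * H < v i ∧ v i ≤ 2 ^ j * H))
    (g : Fin n → ℝ)  -- `g i` plays the role of `f_i(β)`
    (hlayer0 : ∀ i ∈ P 0, 0 ≤ g i ∧ g i ≤ H + B)
    (hlayerj : ∀ j, 1 ≤ j → j ≤ N → ∀ i ∈ P j,
      2 ^ (j - 1) * H - B ≤ g i ∧ g i ≤ 2 ^ j * H + B)
    (Q : ℕ → Finset (Fin n)) (hQ : ∀ j ≤ N, Q j ⊆ P j)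
    (hsamp : ∀ j ≤ N,
      |((P j).card : ℝ) / (Q j).card * ∑ i ∈ Q j, g i - ∑ i ∈ P j, g i|
        ≤ ((P j).card : ℝ) * ε₁ * 2 ^ ((j : ℤ) - 1) * H) :
    (n : ℝ) *
        |(1 / n) * (∑ j ∈ Finset.range (N + 1),
            ((P j).card : ℝ) / (Q j).card * ∑ i ∈ Q j, g i) - (∑ i, g i) / n|
      ≤ ∑ j ∈ Finset.range (N + 1), ((P j).card : ℝ) * ε₁ * 2 ^ ((j : ℤ) - 1) * H ∧
    ∑ j ∈ Finset.range (N + 1), ((P j).card : ℝ) * ε₁ * 2 ^ ((j : ℤ) - 1) * H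
      ≤ 3 / 2 * ε₁ * n * H := by
  classical
  have hn' : (0:ℝ) < n := by exact_mod_cast hn
  have hnne : (n:ℝ) ≠ 0 := ne_of_gt hn'
  have hex : ∀ i : Fin n, ∃ j, v i ≤ 2 ^ j * H := fun i => ⟨N, hvup i⟩
  set L : Fin n → ℕ := fun i => Nat.find (hex i) with hLdef
  have hLN : ∀ i, L i ≤ N := fun i => Nat.find_le (hvup i)
  have hmem : ∀ j ≤ N, ∀ i : Fin n, i ∈ P j ↔ L i = j := by
    intro j hj i
    rcases Nat.eq_zero_or_pos j with rfl | hj1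
    · rw [hP0]
      simp only [mem_filter, mem_univ, true_and, hLdef, Nat.find_eq_zero]
      norm_num
    · rw [hPj j hj1 hj]
      simp only [mem_filter, mem_univ, true_and, hLdef]
      rw [Nat.find_eq_iff]
      constructor
      · rintro ⟨h1, h2⟩
        refine ⟨h2, fun k hk hc => ?_⟩
        have h2k : (2:ℝ)^k ≤ 2^(j-1) := by
          apply pow_le_pow_right₀ (by norm_num) (by omega)
        nlinarith
      · rintro ⟨h2, hmin⟩
        refine ⟨?_, h2⟩
        have := hmin (j-1) (by omega)
        push_neg at this
        exact this
  have hPfib : ∀ j ∈ Finset.range (N+1), P j = Finset.univ.filter (fun i => L i = j) := by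
    intro j hj
    rw [Finset.mem_range] at hj
    ext i
    rw [hmem j (by omega) i, mem_filter]
    simp
  have hfib : ∀ w : Fin n → ℝ,
      ∑ j ∈ Finset.range (N+1), ∑ i ∈ P j, w i = ∑ i, w i := by
    intro w
    rw [Finset.sum_congr rfl fun j hj => by rw [hPfib j hj]]
    exact Finset.sum_fiberwise_of_maps_to (fun i _ => Finset.mem_range.mpr
      (Nat.lt_succ_of_le (hLN i))) w
  constructor
  · -- first inequality
    have hS : (∑ i, g i) = ∑ j ∈ Finset.range (N+1), ∑ i ∈ P j, g i := (hfib g).symm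
    have key : (1 / (n:ℝ)) * (∑ j ∈ Finset.range (N + 1),
            ((P j).card : ℝ) / (Q j).card * ∑ i ∈ Q j, g i) - (∑ i, g i) / n
        = (∑ j ∈ Finset.range (N+1),
            (((P j).card : ℝ) / (Q j).card * ∑ i ∈ Q j, g i - ∑ i ∈ P j, g i)) / n := by
      rw [hS, Finset.sum_sub_distrib]
      ring
    rw [key, abs_div, abs_of_pos hn', mul_div_cancel₀ _ hnne]
    calc |∑ j ∈ Finset.range (N+1),
            (((P j).card : ℝ) / (Q j).card * ∑ i ∈ Q j, g i - ∑ i ∈ P j, g i)|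
        ≤ ∑ j ∈ Finset.range (N+1),
            |((P j).card : ℝ) / (Q j).card * ∑ i ∈ Q j, g i - ∑ i ∈ P j, g i| :=
          Finset.abs_sum_le_sum_abs _ _
      _ ≤ ∑ j ∈ Finset.range (N + 1), ((P j).card : ℝ) * ε₁ * 2 ^ ((j : ℤ) - 1) * H :=
          Finset.sum_le_sum fun j hj => hsamp j (by
            rw [Finset.mem_range] at hj; omega)
  · -- Claim 1 part
    have hsumv : (∑ i, v i) = n * H := by
      field_simp at hmean; linarith [hmean]
    have hvfib : ∑ j ∈ Finset.range (N+1), ∑ i ∈ P j, v i = n * H := by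
      rw [hfib v, hsumv]
    have hsplit : ∑ j ∈ Finset.range (N + 1), ((P j).card : ℝ) * ε₁ * 2 ^ ((j : ℤ) - 1) * H
        = (∑ j ∈ Finset.range N,
            ((P (j+1)).card : ℝ) * ε₁ * 2 ^ (((j+1 : ℕ) : ℤ) - 1) * H)
          + ((P 0).card : ℝ) * ε₁ * 2 ^ ((0:ℤ) - 1) * H := by
      rw [Finset.sum_range_succ']
      norm_num
    have hvsplit : (∑ j ∈ Finset.range N, ∑ i ∈ P (j+1), v i) + ∑ i ∈ P 0, v i
        = n * H := by
      rw [← hvfib, Finset.sum_range_succ']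
    have hP0card : ((P 0).card : ℝ) ≤ n := by
      exact_mod_cast Finset.card_le_card (Finset.subset_univ _) |>.trans_eq (by simp)
    have hP0v : 0 ≤ ∑ i ∈ P 0, v i := Finset.sum_nonneg fun i _ => hv0 i
    have hterm : ∀ j ∈ Finset.range N,
        ((P (j+1)).card : ℝ) * ε₁ * 2 ^ (((j+1 : ℕ) : ℤ) - 1) * H
          ≤ ε₁ * ∑ i ∈ P (j+1), v i := by
      intro j hj
      rw [Finset.mem_range] at hj
      have hz : (2:ℝ) ^ (((j+1 : ℕ) : ℤ) - 1) = 2 ^ j := by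
        have : ((j+1 : ℕ) : ℤ) - 1 = (j : ℤ) := by push_cast; ring
        rw [this, zpow_natCast]
      rw [hz]
      have hlow : ∀ i ∈ P (j+1), (2:ℝ) ^ j * H ≤ v i := by
        intro i hi
        rw [hPj (j+1) (by omega) (by omega)] at hi
        simp only [mem_filter, Nat.add_sub_cancel] at hi
        exact le_of_lt hi.2.1
      have hcard : ((P (j+1)).card : ℝ) * (2 ^ j * H) ≤ ∑ i ∈ P (j+1), v i := by
        calc ((P (j+1)).card : ℝ) * (2 ^ j * H)
            = ∑ _i ∈ P (j+1), (2:ℝ) ^ j * H := by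
              rw [Finset.sum_const, nsmul_eq_mul]
          _ ≤ ∑ i ∈ P (j+1), v i := Finset.sum_le_sum hlow
      calc ((P (j+1)).card : ℝ) * ε₁ * 2 ^ j * H
          = ε₁ * (((P (j+1)).card : ℝ) * (2 ^ j * H)) := by ring
        _ ≤ ε₁ * ∑ i ∈ P (j+1), v i := by
            exact mul_le_mul_of_nonneg_left hcard hε₁
    have hsum1 : ∑ j ∈ Finset.range N,
        ((P (j+1)).card : ℝ) * ε₁ * 2 ^ (((j+1 : ℕ) : ℤ) - 1) * H
          ≤ ε₁ * (n * H) := by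
      calc ∑ j ∈ Finset.range N,
            ((P (j+1)).card : ℝ) * ε₁ * 2 ^ (((j+1 : ℕ) : ℤ) - 1) * H
          ≤ ∑ j ∈ Finset.range N, ε₁ * ∑ i ∈ P (j+1), v i :=
            Finset.sum_le_sum hterm
        _ = ε₁ * ∑ j ∈ Finset.range N, ∑ i ∈ P (j+1), v i := by
            rw [Finset.mul_sum]
        _ ≤ ε₁ * (n * H) := by
            apply mul_le_mul_of_nonneg_left _ hε₁
            linarith
    have h0 : ((P 0).card : ℝ) * ε₁ * 2 ^ ((0:ℤ) - 1) * H ≤ ε₁ * (n * H) / 2 := by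
      have : (2:ℝ) ^ ((0:ℤ) - 1) = 1/2 := by norm_num
      rw [this]
      have := mul_le_mul_of_nonneg_right (mul_le_mul_of_nonneg_right hP0card hε₁)
        (le_of_lt hH)
      nlinarith
    rw [hsplit]
    linarith
end
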